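/- Let (V, E, s, t, G, M, ℓ) be a tropical curve datum whose underlying graph is connected. Then the tropical Jacobian TroPic⁰ is a finite group if and only if the datum is log aligned, i.e. for every circuit γ ∈ H₁ there exists an extreme ray F of M such that ℓ(e) ∈ F for every edge e in the support of γ. -/

import Mathlib

namespace TropicalNeron

variable {V E : Type*} [Fintype E]
variable {G : Type*} [AddCommGroup G]

open scoped Classical in
/-- The boundary map `δ : (E → ℤ) → (V → ℤ)` of a graph with source `s` and target `t`. -/
noncomputable def delta (s t : E → V) : (E → ℤ) →+ (V → ℤ) where
  toFun f := fun v => (∑ e, if t e = v then f e else 0) - ∑ e, if s e = v then f e else 0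
  map_zero' := by funext v; simp
  map_add' f g := by
    classical
    funext v
    have h : ∀ w : E → V,
        (∑ e, if w e = v then (f + g) e else 0)
          = (∑ e, if w e = v then f e else 0) + ∑ e, if w e = v then g e else 0 := by
      intro w
      rw [← Finset.sum_add_distrib]
      refine Finset.sum_congr rfl fun e _ => ?_
      by_cases hw : w e = v <;> simp [hw]
    simp only [Pi.add_apply] at *
    rw [h, h]
    ring

/-- The first homology of the graph: the kernel of the boundary map. -/
noncomputable def H1 (s t : E → V) : AddSubgroup (E → ℤ) := (delta s t).ker

/-- The monodromy pairing `⟨γ, γ'⟩ = ∑ e, γ(e)·γ'(e) • ℓ(e)`. -/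
def pairing (ℓ : E → G) (γ γ' : E → ℤ) : G := ∑ e, (γ e * γ' e) • ℓ e

/-- Pairing with a fixed cycle `γ`, as a homomorphism `H₁ → G`. -/
noncomputable def periodHom (s t : E → V) (ℓ : E → G) (γ : H1 s t) : ↥(H1 s t) →+ G where
  toFun γ' := pairing ℓ γ γ'
  map_zero' := by simp [pairing]
  map_add' γ₁ γ₂ := by
    simp only [pairing, AddSubgroup.coe_add, Pi.add_apply, mul_add, add_smul]
    rw [Finset.sum_add_distrib]

/-- The period map `H₁ → Hom(H₁, G)`, `γ ↦ ⟨γ, −⟩`. -/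
noncomputable def periodMap (s t : E → V) (ℓ : E → G) : ↥(H1 s t) →+ (↥(H1 s t) →+ G) where
  toFun := periodHom s t ℓ
  map_zero' := by
    ext γ'
    simp [periodHom, pairing]
  map_add' γ₁ γ₂ := by
    ext γ'
    simp only [periodHom, AddMonoidHom.coe_mk, ZeroHom.coe_mk, AddMonoidHom.add_apply,
      pairing, AddSubgroup.coe_add, Pi.add_apply, add_mul, add_smul]
    rw [Finset.sum_add_distrib]

/-- `a` is bounded by `b` for the order `x ≤ y ↔ y - x ∈ M`. -/
def Bounded (M : AddSubmonoid G) (b a : G) : Prop :=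
  ∃ n m : ℤ, a - n • b ∈ M ∧ m • b - a ∈ M

/-- A homomorphism `φ : H₁ → G` has bounded monodromy if `φ(γ)` is bounded by `⟨γ,γ⟩`
for every `γ ∈ H₁`. -/
def BoundedMonodromy (s t : E → V) (M : AddSubmonoid G) (ℓ : E → G)
    (φ : ↥(H1 s t) →+ G) : Prop :=
  ∀ γ : H1 s t, Bounded M (pairing ℓ γ γ) (φ γ)

/-- The subgroup `Hom(H₁,G)† ⊆ Hom(H₁,G)` of bounded-monodromy homomorphisms. -/
noncomputable def BMHom (s t : E → V) (M : AddSubmonoid G) (ℓ : E → G) :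
    AddSubgroup (↥(H1 s t) →+ G) where
  carrier := {φ | BoundedMonodromy s t M ℓ φ}
  zero_mem' := fun γ => ⟨0, 0, by simpa using M.zero_mem, by simpa using M.zero_mem⟩
  add_mem' := by
    rintro φ ψ hφ hψ γ
    obtain ⟨n, m, h1, h2⟩ := hφ γ
    obtain ⟨n', m', h1', h2'⟩ := hψ γ
    refine ⟨n + n', m + m', ?_, ?_⟩
    · have h := AddSubmonoid.add_mem _ h1 h1'
      have e : φ γ - n • pairing ℓ γ γ + (ψ γ - n' • pairing ℓ γ γ)
          = (φ + ψ) γ - (n + n') • pairing ℓ γ γ := by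
        rw [AddMonoidHom.add_apply, add_smul]; abel
      rwa [e] at h
    · have h := AddSubmonoid.add_mem _ h2 h2'
      have e : m • pairing ℓ γ γ - φ γ + (m' • pairing ℓ γ γ - ψ γ)
          = (m + m') • pairing ℓ γ γ - (φ + ψ) γ := by
        rw [AddMonoidHom.add_apply, add_smul]; abel
      rwa [e] at h
  neg_mem' := by
    rintro φ hφ γ
    obtain ⟨n, m, h1, h2⟩ := hφ γ
    refine ⟨-m, -n, ?_, ?_⟩
    · have e : m • pairing ℓ γ γ - φ γ = (-φ) γ - (-m) • pairing ℓ γ γ := by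
        rw [AddMonoidHom.neg_apply, neg_smul]; abel
      rwa [e] at h2
    · have e : φ γ - n • pairing ℓ γ γ = (-n) • pairing ℓ γ γ - (-φ) γ := by
        rw [AddMonoidHom.neg_apply, neg_smul]; abel
      rwa [e] at h1

/-- The subgroup of `Hom(H₁,G)†` of homomorphisms of the form `⟨γ, −⟩`. -/
noncomputable def periods (s t : E → V) (M : AddSubmonoid G) (ℓ : E → G) :
    AddSubgroup ↥(BMHom s t M ℓ) :=
  AddSubgroup.comap (BMHom s t M ℓ).subtype (periodMap s t ℓ).range

/-- The tropical Jacobian `TroPic⁰ = Hom(H₁,G)† / {⟨γ,−⟩ : γ ∈ H₁}`. -/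
noncomputable abbrev TroPic0 (s t : E → V) (M : AddSubmonoid G) (ℓ : E → G) :=
  ↥(BMHom s t M ℓ) ⧸ periods s t M ℓ

/-- The standard hypotheses on a tropical curve datum: `M` is a sharp, saturated,
generating submonoid of `G`, and all edge lengths lie in `M` and are nonzero. -/
def IsTropicalCurveDatum (s t : E → V) (M : AddSubmonoid G) (ℓ : E → G) : Prop :=
  (∀ g ∈ M, -g ∈ M → g = 0) ∧
  (∀ (g : G) (n : ℕ), 1 ≤ n → (n : ℤ) • g ∈ M → g ∈ M) ∧
  (∀ g : G, ∃ a ∈ M, ∃ b ∈ M, g = a - b) ∧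
  (∀ e, ℓ e ∈ M) ∧
  (∀ e, ℓ e ≠ 0)

/-- The support of a cycle: the set of edges on which it is nonzero. -/
def support (γ : E → ℤ) : Set E := {e | γ e ≠ 0}

/-- A circuit: a nonzero element of `H₁` such that no nonzero element of `H₁` has support
strictly contained in its support. -/
def IsCircuit (s t : E → V) (γ : H1 s t) : Prop :=
  (γ : E → ℤ) ≠ 0 ∧
    ∀ γ' : H1 s t, (γ' : E → ℤ) ≠ 0 →
      ¬ support (γ' : E → ℤ) ⊂ support (γ : E → ℤ)

/-- A face of `M`: a submonoid `F ≤ M` such that `a + b ∈ F` with `a, b ∈ M` forces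
`a ∈ F`. -/
def IsFace {G : Type*} [AddCommGroup G] (M F : AddSubmonoid G) : Prop :=
  F ≤ M ∧ ∀ a ∈ M, ∀ b ∈ M, a + b ∈ F → a ∈ F

/-- An extreme ray of `M`: a nonzero face any two nonzero elements of which are
commensurable. -/
def IsExtremeRay {G : Type*} [AddCommGroup G] (M F : AddSubmonoid G) : Prop :=
  IsFace M F ∧ F ≠ ⊥ ∧
    ∀ a ∈ F, a ≠ 0 → ∀ b ∈ F, b ≠ 0 → ∃ n m : ℕ, 1 ≤ n ∧ 1 ≤ m ∧ n • a = m • b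

/-- Connectedness of the graph: the equivalence relation generated by `s e ∼ t e` has a
single class. -/
def GraphConnected (s t : E → V) : Prop :=
  ∀ v w : V, Relation.EqvGen (fun a b => ∃ e, s e = a ∧ t e = b) v w

/-- A tropical curve datum is log aligned if on each circuit, all edge lengths lie on a
single extreme ray of `M`. -/
def IsLogAligned {V E : Type*} [Fintype E] {G : Type*} [AddCommGroup G]
    (s t : E → V) (M : AddSubmonoid G) (ℓ : E → G) : Prop :=
  ∀ γ : H1 s t, IsCircuit s t γ →
    ∃ F : AddSubmonoid G, IsExtremeRay M F ∧
      ∀ e, (γ : E → ℤ) e ≠ 0 → ℓ e ∈ F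

end TropicalNeron

/-!
`TroPic⁰` is finitely generated, so it is finite iff some nonzero multiple of every
bounded-monodromy homomorphism `φ : H₁ → G` is a period `⟨η, -⟩`.

Suppose this holds, let `δ` be a circuit through an edge `e₀`, and let `R` be the smallest face of
`M` containing `ℓ e₀`. For `a ∈ R`, the map `γ ↦ γ(e₀) • a` has bounded monodromy; pairing the
periods of two such maps with each other shows that nonzero elements of `R` are commensurable.
Pairing with `δ` restricted to the edges of length in `R` also has bounded monodromy, and
anisotropy of the pairing forces its period to be a multiple of that restriction. This is a
cycle, so by minimality of `δ` all edges of `δ` have length in `R`.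

Conversely, for a log aligned datum choose circuits `δᵢ` forming a basis of `H₁ ⊗ ℚ`. Since
`⟨δᵢ, δᵢ⟩` lies on an extreme ray, everything bounded by it is a rational multiple of it, so
`⟨x, δᵢ⟩ = φ(δᵢ)` is a square linear system over `ℚ`. It is injective by anisotropy, hence
solvable, and clearing denominators of `x` gives a period of a multiple of `φ`.
-/

namespace TropicalNeron

variable {V E : Type*} {G : Type*} [AddCommGroup G]

section Cones

variable {M : AddSubmonoid G}

theorem zsmul_mem_of_nonneg {a : G} (ha : a ∈ M) {n : ℤ} (hn : 0 ≤ n) : n • a ∈ M := by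
  lift n to ℕ using hn
  rw [natCast_zsmul]
  exact nsmul_mem ha n

theorem isAddTorsionFree_of_sharp_of_saturated (hsharp : ∀ g ∈ M, -g ∈ M → g = 0)
    (hsat : ∀ (g : G) (n : ℕ), 1 ≤ n → (n : ℤ) • g ∈ M → g ∈ M) : IsAddTorsionFree G := by
  refine ⟨fun n hn a b hab => ?_⟩
  have hmem : ∀ g : G, n • g = 0 → g ∈ M := fun g h =>
    hsat g n (Nat.one_le_iff_ne_zero.2 hn) (by rw [natCast_zsmul, h]; exact M.zero_mem)
  have hab' : n • (a - b) = 0 := by rw [nsmul_sub, sub_eq_zero]; exact hab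
  rw [← sub_eq_zero]
  exact hsharp _ (hmem _ hab') (hmem _ (by rw [smul_neg, hab', neg_zero]))

theorem isFace_bot (hsharp : ∀ g ∈ M, -g ∈ M → g = 0) : IsFace M ⊥ := by
  refine ⟨bot_le, fun a ha b hb hab => ?_⟩
  rw [AddSubmonoid.mem_bot] at hab ⊢
  exact hsharp a ha (by rwa [← eq_neg_of_add_eq_zero_right hab])

theorem IsFace.mem_of_sum_mem {F : AddSubmonoid G} (hF : IsFace M F) {ι : Type*}
    {s : Finset ι} {f : ι → G} (hf : ∀ i ∈ s, f i ∈ M) (hsum : ∑ i ∈ s, f i ∈ F) {i : ι}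
    (hi : i ∈ s) : f i ∈ F := by
  classical
  rw [← Finset.add_sum_erase s f hi] at hsum
  exact hF.2 _ (hf i hi) _ (AddSubmonoid.sum_mem _ fun j hj => hf j (Finset.mem_of_mem_erase hj))
    hsum

theorem IsFace.mem_of_zsmul_mem {F : AddSubmonoid G} (hF : IsFace M F) {x : G} (hx : x ∈ M)
    {n : ℤ} (hn : 1 ≤ n) (h : n • x ∈ F) : x ∈ F := by
  refine hF.2 x hx ((n - 1) • x) (zsmul_mem_of_nonneg hx (by omega)) ?_
  rwa [← one_add_zsmul, add_sub_cancel]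

theorem IsFace.mem_of_mem_closure {F : AddSubmonoid G} (hF : IsFace M F) {x : G} (hx : x ∈ M)
    (hcl : x ∈ AddSubgroup.closure (F : Set G)) : x ∈ F := by
  obtain ⟨a, ha, b, hb, rfl⟩ : ∃ a ∈ F, ∃ b ∈ F, x = a - b := by
    clear hx
    induction hcl using AddSubgroup.closure_induction with
    | mem y hy => exact ⟨y, hy, 0, F.zero_mem, (sub_zero y).symm⟩
    | zero => exact ⟨0, F.zero_mem, 0, F.zero_mem, (sub_zero 0).symm⟩
    | add y z _ _ hy hz =>
      obtain ⟨a, ha, b, hb, rfl⟩ := hy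
      obtain ⟨c, hc, d, hd, rfl⟩ := hz
      exact ⟨a + c, F.add_mem ha hc, b + d, F.add_mem hb hd, by abel⟩
    | neg y _ hy =>
      obtain ⟨a, ha, b, hb, rfl⟩ := hy
      exact ⟨b, hb, a, ha, neg_sub a b⟩
  exact hF.2 _ hx b (hF.1 hb) (by rwa [sub_add_cancel])

variable (M) in
/-- The smallest face of `M` containing `x`. -/
def faceOf (x : G) : AddSubmonoid G where
  carrier := {a | a ∈ M ∧ ∃ b ∈ M, ∃ n : ℕ, a + b = n • x}
  zero_mem' := ⟨M.zero_mem, 0, M.zero_mem, 0, by simp⟩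
  add_mem' := by
    rintro a a' ⟨ha, b, hb, n, hab⟩ ⟨ha', b', hb', n', hab'⟩
    refine ⟨M.add_mem ha ha', b + b', M.add_mem hb hb', n + n', ?_⟩
    rw [add_nsmul, ← hab, ← hab']
    abel

theorem isFace_faceOf (x : G) : IsFace M (faceOf M x) := by
  refine ⟨fun a ha => ha.1, ?_⟩
  rintro a ha b hb ⟨-, c, hc, n, habc⟩
  exact ⟨ha, b + c, M.add_mem hb hc, n, by rw [← habc, add_assoc]⟩

theorem mem_faceOf_self {x : G} (hx : x ∈ M) : x ∈ faceOf M x :=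
  ⟨hx, 0, M.zero_mem, 1, by rw [add_zero, one_nsmul]⟩

theorem exists_nsmul_eq_nsmul_of_zsmul_eq [IsAddTorsionFree G]
    (hsharp : ∀ g ∈ M, -g ∈ M → g = 0) {a b : G} (ha : a ∈ M) (hb : b ∈ M) (ha0 : a ≠ 0)
    {p q : ℤ} (hp : p ≠ 0) (hq : q ≠ 0) (h : p • a = q • b) :
    ∃ n m : ℕ, 1 ≤ n ∧ 1 ≤ m ∧ n • a = m • b := by
  have hqp : (q * p) • a = (q * q) • b := by rw [mul_smul, h, mul_smul]
  have hpos : 0 < q * p := by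
    by_contra hneg
    have hzero : (q * p) • a = 0 :=
      hsharp _ (hqp ▸ zsmul_mem_of_nonneg hb (mul_self_nonneg q))
        (by rw [← neg_smul]; exact zsmul_mem_of_nonneg ha (by omega))
    exact ha0 ((smul_eq_zero.mp hzero).resolve_left (mul_ne_zero hq hp))
  refine ⟨(q * p).toNat, (q * q).toNat, by omega, by have := mul_self_pos.mpr hq; omega, ?_⟩
  rw [← natCast_zsmul, ← natCast_zsmul, Int.toNat_of_nonneg hpos.le,
    Int.toNat_of_nonneg (mul_self_nonneg q), hqp]

/-- The gap `x - n • z` is a summand of `(m - n) • z`, which lies in `F` (by sharpness it is `0`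
when `m ≤ n`), so the gap lies on the ray `F`. -/
theorem exists_zsmul_eq_zsmul_of_bounded {F : AddSubmonoid G}
    (hsharp : ∀ g ∈ M, -g ∈ M → g = 0) (hF : IsExtremeRay M F) {z x : G} (hz : z ∈ F)
    (hz0 : z ≠ 0) (hx : Bounded M z x) : ∃ p q : ℤ, q ≠ 0 ∧ q • x = p • z := by
  obtain ⟨n, m, hlo, hhi⟩ := hx
  have hsum : (x - n • z) + (m • z - x) = (m - n) • z := by rw [sub_smul]; abel
  have hsumF : (x - n • z) + (m • z - x) ∈ F := by
    rcases le_or_gt (m - n) 0 with hmn | hmn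
    · rw [hsharp _ (M.add_mem hlo hhi) (by
        rw [hsum, ← neg_smul]; exact zsmul_mem_of_nonneg (hF.1.1 hz) (by omega))]
      exact F.zero_mem
    · rw [hsum]; exact zsmul_mem_of_nonneg hz hmn.le
  by_cases h0 : x - n • z = 0
  · exact ⟨n, 1, one_ne_zero, by rw [one_smul, ← sub_eq_zero, h0]⟩
  obtain ⟨a, b, ha, -, hab⟩ := hF.2.2 _ (hF.1.2 _ hlo _ hhi hsumF) h0 z hz hz0
  have hab' : (a : ℤ) • (x - n • z) = (b : ℤ) • z := by simpa only [natCast_zsmul] using hab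
  refine ⟨b + a * n, a, by omega, ?_⟩
  rw [add_smul, mul_smul, ← hab', smul_sub, sub_add_cancel]

end Cones

section RationalSpan

variable {A W : Type*} [AddCommGroup A] [AddCommGroup W] [Module ℚ W]

theorem mem_span_image_iff_exists_zsmul_mem_closure {f : A →+ W} (hf : Function.Injective f)
    {S : Set A} {a : A} :
    f a ∈ Submodule.span ℚ (f '' S) ↔ ∃ n : ℤ, n ≠ 0 ∧ n • a ∈ AddSubgroup.closure S := by
  constructor
  · intro ha
    suffices key : ∀ w ∈ Submodule.span ℚ (f '' S),
        ∃ n : ℤ, n ≠ 0 ∧ ∃ σ ∈ AddSubgroup.closure S, (n : ℚ) • w = f σ by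
      obtain ⟨n, hn, σ, hσ, hfσ⟩ := key _ ha
      have hnσ : n • a = σ := hf (by rw [map_zsmul, ← Int.cast_smul_eq_zsmul ℚ, hfσ])
      exact ⟨n, hn, hnσ ▸ hσ⟩
    intro w hw
    induction hw using Submodule.span_induction with
    | mem w hw =>
      obtain ⟨σ, hσ, rfl⟩ := hw
      exact ⟨1, one_ne_zero, σ, AddSubgroup.subset_closure hσ, by simp⟩
    | zero => exact ⟨1, one_ne_zero, 0, zero_mem _, by simp⟩
    | add w w' _ _ hw hw' =>
      obtain ⟨n, hn, σ, hσ, hnw⟩ := hw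
      obtain ⟨n', hn', σ', hσ', hnw'⟩ := hw'
      refine ⟨n * n', mul_ne_zero hn hn', n' • σ + n • σ',
        add_mem (zsmul_mem hσ _) (zsmul_mem hσ' _), ?_⟩
      rw [map_add, map_zsmul, map_zsmul, ← hnw, ← hnw', ← Int.cast_smul_eq_zsmul ℚ,
        ← Int.cast_smul_eq_zsmul ℚ, smul_smul, smul_smul, smul_add, Int.cast_mul, mul_comm]
    | smul q w _ hw =>
      obtain ⟨n, hn, σ, hσ, hnw⟩ := hw
      refine ⟨q.den * n, mul_ne_zero (by exact_mod_cast q.den_ne_zero) hn, q.num • σ,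
        zsmul_mem hσ _, ?_⟩
      rw [map_zsmul, ← hnw, ← Int.cast_smul_eq_zsmul ℚ, smul_smul, smul_smul]
      congr 1
      push_cast
      rw [mul_right_comm, Rat.den_mul_eq_num]
  · rintro ⟨n, hn, hna⟩
    have hcl : AddSubgroup.closure S ≤ (Submodule.span ℚ (f '' S)).toAddSubgroup.comap f :=
      (AddSubgroup.closure_le _).mpr fun σ hσ => Submodule.subset_span ⟨σ, hσ, rfl⟩
    have hfn : (n : ℚ) • f a ∈ Submodule.span ℚ (f '' S) := by
      rw [Int.cast_smul_eq_zsmul, ← map_zsmul]; exact hcl hna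
    have := Submodule.smul_mem _ (n : ℚ)⁻¹ hfn
    rwa [inv_smul_smul₀ ((Int.cast_ne_zero (α := ℚ)).mpr hn)] at this

theorem AddMonoidHom.eq_of_eqOn_of_zsmul_mem_closure {B : Type*} [AddCommGroup B]
    [IsAddTorsionFree B] {f g : A →+ B} {S : Set A}
    (hS : ∀ a, ∃ n : ℤ, n ≠ 0 ∧ n • a ∈ AddSubgroup.closure S) (h : Set.EqOn f g S) : f = g := by
  ext a
  obtain ⟨n, hn, hna⟩ := hS a
  have := AddMonoidHom.eqOn_closure h hna
  rwa [map_zsmul, map_zsmul, zsmul_right_inj hn] at this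

theorem exists_intCast_eq_zsmul {ι : Type*} [Finite ι] (x : ι → ℚ) :
    ∃ D : ℤ, D ≠ 0 ∧ ∃ y : ι → ℤ, ∀ i, (y i : ℚ) = D • x i := by
  obtain ⟨⟨D, hD⟩, hx⟩ := IsLocalization.exist_integer_multiples_of_finite (nonZeroDivisors ℤ) x
  choose y hy using hx
  exact ⟨D, nonZeroDivisors.ne_zero hD, y, fun i => by simpa using hy i⟩

theorem exists_injective_addMonoidHom_rat [IsAddTorsionFree G] (hG : AddGroup.FG G) :
    ∃ n : ℕ, ∃ em : G →+ (Fin n → ℚ), Function.Injective em := by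
  have : Module.Finite ℤ G := Module.Finite.iff_addGroup_fg.mpr hG
  have : Module.Free ℤ G := Module.free_of_finite_type_torsion_free'
  exact ⟨_, ((Int.castAddHom ℚ).compLeft _).comp (Module.finBasis ℤ G).equivFun.toAddMonoidHom,
    (Int.cast_injective.comp_left).comp (Module.finBasis ℤ G).equivFun.injective⟩

end RationalSpan

/-- Writing `Q (b j) (b i) = A i j • Q (b i) (b i)` turns the system into `A c = v` over `K`,
and anisotropy makes the square matrix `A` injective, hence invertible. -/
theorem exists_pairing_sum_smul_eq {K V U ι : Type*} [Field K] [Fintype ι] [AddCommGroup V]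
    [Module K V] [AddCommGroup U] [Module K U] (Q : V →ₗ[K] V →ₗ[K] U)
    (hQ : ∀ x, Q x x = 0 → x = 0) {b : ι → V} (hb : LinearIndependent K b)
    (hline : ∀ i j, Q (b j) (b i) ∈ K ∙ Q (b i) (b i)) {u : ι → U}
    (hu : ∀ i, u i ∈ K ∙ Q (b i) (b i)) :
    ∃ c : ι → K, ∀ i, Q (∑ j, c j • b j) (b i) = u i := by
  choose A hA using fun i j => Submodule.mem_span_singleton.mp (hline i j)
  choose v hv using fun i => Submodule.mem_span_singleton.mp (hu i)
  have hQc : ∀ (c : ι → K) i,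
      Q (∑ j, c j • b j) (b i) = Matrix.mulVec (Matrix.of A) c i • Q (b i) (b i) := by
    intro c i
    calc Q (∑ j, c j • b j) (b i) = ∑ j, (A i j * c j) • Q (b i) (b i) := by
          rw [map_sum, LinearMap.sum_apply]
          refine Finset.sum_congr rfl fun j _ => ?_
          rw [map_smul, LinearMap.smul_apply, ← hA, smul_smul, mul_comm]
      _ = Matrix.mulVec (Matrix.of A) c i • Q (b i) (b i) := by
          rw [← Finset.sum_smul]; rfl
  have hinj : Function.Injective (Matrix.of A).mulVecLin := by
    rw [← LinearMap.ker_eq_bot, LinearMap.ker_eq_bot']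
    intro c hc
    have hcol : ∀ i, Q (∑ j, c j • b j) (b i) = 0 := fun i => by
      rw [hQc, ← Matrix.mulVecLin_apply, hc, Pi.zero_apply, zero_smul]
    have hcx : Q (∑ j, c j • b j) (∑ j, c j • b j) = 0 := by
      simp only [map_sum (Q (∑ j, c j • b j)), map_smul, hcol, smul_zero, Finset.sum_const_zero]
    exact funext (Fintype.linearIndependent_iff.mp hb c (hQ _ hcx))
  obtain ⟨c, hc⟩ := LinearMap.injective_iff_surjective.mp hinj v
  exact ⟨c, fun i => by rw [hQc, ← Matrix.mulVecLin_apply, hc, hv]⟩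

section Pairing

variable {s t : E → V} {M : AddSubmonoid G} {ℓ : E → G}

theorem IsTropicalCurveDatum.sharp (hd : IsTropicalCurveDatum s t M ℓ) :
    ∀ g ∈ M, -g ∈ M → g = 0 :=
  hd.1

theorem IsTropicalCurveDatum.length_mem (hd : IsTropicalCurveDatum s t M ℓ) (e : E) :
    ℓ e ∈ M :=
  hd.2.2.2.1 e

theorem IsTropicalCurveDatum.length_ne_zero (hd : IsTropicalCurveDatum s t M ℓ) (e : E) :
    ℓ e ≠ 0 :=
  hd.2.2.2.2 e

theorem IsTropicalCurveDatum.isAddTorsionFree (hd : IsTropicalCurveDatum s t M ℓ) :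
    IsAddTorsionFree G :=
  isAddTorsionFree_of_sharp_of_saturated hd.1 hd.2.1

variable [Fintype E]

theorem pairing_comm (ℓ : E → G) (γ γ' : E → ℤ) : pairing ℓ γ γ' = pairing ℓ γ' γ :=
  Finset.sum_congr rfl fun e _ => by rw [mul_comm]

theorem sum_zsmul_mem (hℓ : ∀ e, ℓ e ∈ M) {c : E → ℤ} (hc : ∀ e, 0 ≤ c e) :
    ∑ e, c e • ℓ e ∈ M :=
  AddSubmonoid.sum_mem _ fun e _ => zsmul_mem_of_nonneg (hℓ e) (hc e)

theorem pairing_self_sub_mem (hℓ : ∀ e, ℓ e ∈ M) (γ : E → ℤ) (e : E) :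
    pairing ℓ γ γ - (γ e * γ e) • ℓ e ∈ M := by
  classical
  rw [pairing, ← Finset.add_sum_erase _ _ (Finset.mem_univ e), add_sub_cancel_left]
  exact AddSubmonoid.sum_mem _ fun e' _ => zsmul_mem_of_nonneg (hℓ e') (mul_self_nonneg _)

theorem eq_zero_of_pairing_self_eq_zero (hd : IsTropicalCurveDatum s t M ℓ) {γ : E → ℤ}
    (h : pairing ℓ γ γ = 0) : γ = 0 := by
  have := hd.isAddTorsionFree
  funext e
  have hterm : (γ e * γ e) • ℓ e ∈ (⊥ : AddSubmonoid G) :=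
    (isFace_bot hd.sharp).mem_of_sum_mem (fun e _ => zsmul_mem_of_nonneg (hd.length_mem e)
      (mul_self_nonneg (γ e))) (by rw [← pairing, h]; exact zero_mem _) (Finset.mem_univ e)
  rcases smul_eq_zero.mp (AddSubmonoid.mem_bot.mp hterm) with h0 | h0
  · exact mul_self_eq_zero.mp h0
  · exact absurd h0 (hd.length_ne_zero e)

theorem pairing_sub_left (a b γ : E → ℤ) :
    pairing ℓ (a - b) γ = pairing ℓ a γ - pairing ℓ b γ := by
  simp [pairing, sub_mul, sub_smul, Finset.sum_sub_distrib]

theorem pairing_zsmul_left (n : ℤ) (a γ : E → ℤ) :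
    pairing ℓ (n • a) γ = n • pairing ℓ a γ := by
  simp [pairing, Finset.smul_sum, mul_assoc, mul_smul]

end Pairing

section BoundedMonodromy

variable [Fintype E] (s t : E → V) {M : AddSubmonoid G} (ℓ : E → G)

def pairingHom (d : E → ℤ) : ↥(H1 s t) →+ G where
  toFun γ := pairing ℓ d γ
  map_zero' := by simp [pairing]
  map_add' _ _ := by simp [pairing, mul_add, add_smul, Finset.sum_add_distrib]

@[simp]
theorem pairingHom_apply (d : E → ℤ) (γ : H1 s t) : pairingHom s t ℓ d γ = pairing ℓ d γ := rfl

def evalHom (e : E) (a : G) : ↥(H1 s t) →+ G where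
  toFun γ := (γ : E → ℤ) e • a
  map_zero' := by simp
  map_add' _ _ := by simp [add_smul]

@[simp]
theorem evalHom_apply (e : E) (a : G) (γ : H1 s t) : evalHom s t e a γ = (γ : E → ℤ) e • a := rfl

variable {s t ℓ}

theorem boundedMonodromy_pairingHom (hℓ : ∀ e, ℓ e ∈ M) (d : E → ℤ) :
    BoundedMonodromy s t M ℓ (pairingHom s t ℓ d) := by
  intro γ
  set C := ∑ e, |d e|
  have key : ∀ σ : ℤ, |σ| = 1 → σ • pairing ℓ d γ + C • pairing ℓ γ γ ∈ M := by
    intro σ hσ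
    have hexp : σ • pairing ℓ d γ + C • pairing ℓ γ γ
        = ∑ e, (σ * (d e * (γ : E → ℤ) e) + C * ((γ : E → ℤ) e * (γ : E → ℤ) e)) • ℓ e := by
      simp only [pairing, Finset.smul_sum, smul_smul, ← Finset.sum_add_distrib, add_smul]
    rw [hexp]
    refine sum_zsmul_mem hℓ fun e => ?_
    have hdC : |d e| ≤ C := Finset.single_le_sum (f := fun e => |d e|)
      (fun e _ => abs_nonneg _) (Finset.mem_univ e)
    have hγ : |(γ : E → ℤ) e| ≤ (γ : E → ℤ) e * (γ : E → ℤ) e := by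
      rw [← abs_mul_abs_self]; exact Int.le_self_sq _ |>.trans_eq (sq _)
    have h1 : -(σ * (d e * (γ : E → ℤ) e)) ≤ |d e| * |(γ : E → ℤ) e| := by
      rw [← abs_mul, ← one_mul |d e * _|, ← hσ, ← abs_mul]; exact neg_le_abs _
    nlinarith [abs_nonneg (d e), abs_nonneg ((γ : E → ℤ) e)]
  refine ⟨-C, C, ?_, ?_⟩
  · simpa [sub_eq_add_neg, neg_smul] using key 1 abs_one
  · simpa [sub_eq_add_neg, add_comm] using key (-1) (by simp)

theorem boundedMonodromy_evalHom (hℓ : ∀ e, ℓ e ∈ M) (e : E) {a : G}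
    (ha : a ∈ faceOf M (ℓ e)) : BoundedMonodromy s t M ℓ (evalHom s t e a) := by
  obtain ⟨haM, b, hbM, N, hab⟩ := ha
  intro γ
  set c := (γ : E → ℤ) e
  have hN : (N : ℤ) • ((c * c) • ℓ e) = (c * c) • a + (c * c) • b := by
    rw [smul_comm, natCast_zsmul, ← hab, smul_add]
  have hrest : (N : ℤ) • (pairing ℓ γ γ - (c * c) • ℓ e) ∈ M :=
    zsmul_mem_of_nonneg (pairing_self_sub_mem hℓ γ e) (Int.natCast_nonneg N)
  refine ⟨-N, N, ?_, ?_⟩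
  · have hexp : evalHom s t e a γ - (-(N : ℤ)) • pairing ℓ γ γ
        = (N : ℤ) • (pairing ℓ γ γ - (c * c) • ℓ e) + ((c * c + c) • a + (c * c) • b) := by
      rw [smul_sub, hN, evalHom_apply]; module
    rw [hexp]
    exact M.add_mem hrest (M.add_mem (zsmul_mem_of_nonneg haM (by nlinarith))
      (zsmul_mem_of_nonneg hbM (mul_self_nonneg c)))
  · have hexp : (N : ℤ) • pairing ℓ γ γ - evalHom s t e a γ
        = (N : ℤ) • (pairing ℓ γ γ - (c * c) • ℓ e) + ((c * c - c) • a + (c * c) • b) := by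
      rw [smul_sub, hN, evalHom_apply]; module
    rw [hexp]
    exact M.add_mem hrest (M.add_mem (zsmul_mem_of_nonneg haM (by nlinarith))
      (zsmul_mem_of_nonneg hbM (mul_self_nonneg c)))

end BoundedMonodromy

section Finiteness

variable [Fintype E] {s t : E → V} {M : AddSubmonoid G} {ℓ : E → G}

theorem exists_zsmul_mem_range_periodMap [Finite (TroPic0 s t M ℓ)] {φ : ↥(H1 s t) →+ G}
    (hφ : φ ∈ BMHom s t M ℓ) : ∃ k : ℤ, k ≠ 0 ∧ k • φ ∈ (periodMap s t ℓ).range := by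
  obtain ⟨k, hk, hkφ⟩ := isOfFinAddOrder_iff_zsmul_eq_zero.mp
    (isOfFinAddOrder_of_finite (QuotientAddGroup.mk ⟨φ, hφ⟩ : TroPic0 s t M ℓ))
  rw [← QuotientAddGroup.mk_zsmul, QuotientAddGroup.eq_zero_iff] at hkφ
  exact ⟨k, hk, hkφ⟩

theorem fg_troPic0 (hG : AddGroup.FG G) : AddGroup.FG (TroPic0 s t M ℓ) := by
  have : Module.Finite ℤ G := Module.Finite.iff_addGroup_fg.mpr hG
  have : Module.Finite ℤ (H1 s t) :=
    Module.Finite.iff_fg.mpr (IsNoetherian.noetherian (AddSubgroup.toIntSubmodule (H1 s t)))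
  have : Module.Free ℤ (H1 s t) := Module.free_of_finite_type_torsion_free'
  have : Module.Finite ℤ (BMHom s t M ℓ) :=
    Module.Finite.iff_fg.mpr (IsNoetherian.noetherian (AddSubgroup.toIntSubmodule (BMHom s t M ℓ)))
  have : AddGroup.FG (BMHom s t M ℓ) := Module.Finite.iff_addGroup_fg.mp this
  infer_instance

theorem finite_troPic0_iff (hG : AddGroup.FG G) :
    Finite (TroPic0 s t M ℓ) ↔
      ∀ φ ∈ BMHom s t M ℓ, ∃ k : ℤ, k ≠ 0 ∧ k • φ ∈ (periodMap s t ℓ).range := by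
  refine ⟨fun _ _ hφ => exists_zsmul_mem_range_periodMap hφ, fun h => ?_⟩
  have := fg_troPic0 (s := s) (t := t) (M := M) (ℓ := ℓ) hG
  refine AddCommGroup.finite_of_fg_isAddTorsion _ fun q => ?_
  induction q using QuotientAddGroup.induction_on with
  | H φ =>
    obtain ⟨k, hk, hkφ⟩ := h φ φ.2
    refine isOfFinAddOrder_iff_zsmul_eq_zero.mpr ⟨k, hk, ?_⟩
    rw [← QuotientAddGroup.mk_zsmul, QuotientAddGroup.eq_zero_iff]
    exact hkφ

theorem exists_period_of_boundedMonodromy [Finite (TroPic0 s t M ℓ)] {φ : ↥(H1 s t) →+ G}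
    (hφ : BoundedMonodromy s t M ℓ φ) :
    ∃ k : ℤ, k ≠ 0 ∧ ∃ η : H1 s t, ∀ γ : H1 s t, k • φ γ = pairing ℓ η γ := by
  obtain ⟨k, hk, η, hη⟩ := exists_zsmul_mem_range_periodMap (M := M) hφ
  exact ⟨k, hk, η, fun γ => (DFunLike.congr_fun hη γ).symm⟩

end Finiteness

section Circuits

variable [Fintype E] {s t : E → V}

theorem exists_isCircuit_support_subset {γ : H1 s t} (hγ : (γ : E → ℤ) ≠ 0) :
    ∃ δ : H1 s t, IsCircuit s t δ ∧ support (δ : E → ℤ) ⊆ support (γ : E → ℤ) := by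
  induction hN : (support (γ : E → ℤ)).ncard using Nat.strong_induction_on generalizing γ with
  | _ N ih =>
    by_cases hc : IsCircuit s t γ
    · exact ⟨γ, hc, subset_rfl⟩
    obtain ⟨γ', hγ'0, hss⟩ : ∃ γ' : H1 s t, (γ' : E → ℤ) ≠ 0 ∧
        support (γ' : E → ℤ) ⊂ support (γ : E → ℤ) := by
      simp only [IsCircuit, hγ, ne_eq, not_false_eq_true, true_and, not_forall, not_not] at hc
      obtain ⟨γ', hγ'0, hss⟩ := hc
      exact ⟨γ', hγ'0, hss⟩
    obtain ⟨δ, hδ, hsub⟩ := ih _ (hN ▸ Set.ncard_lt_ncard hss (Set.toFinite _)) hγ'0 rfl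
    exact ⟨δ, hδ, hsub.trans hss.subset⟩

theorem exists_zsmul_mem_closure_isCircuit (γ : H1 s t) :
    ∃ n : ℤ, n ≠ 0 ∧ n • γ ∈ AddSubgroup.closure {δ | IsCircuit s t δ} := by
  induction hN : (support (γ : E → ℤ)).ncard using Nat.strong_induction_on generalizing γ with
  | _ N ih =>
    by_cases hγ : γ = 0
    · exact ⟨1, one_ne_zero, by rw [hγ, smul_zero]; exact zero_mem _⟩
    obtain ⟨δ, hδ, hsub⟩ := exists_isCircuit_support_subset (fun h => hγ (Subtype.ext h))
    obtain ⟨e, he⟩ := Function.ne_iff.mp hδ.1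
    -- eliminating the edge `e` from `γ` by means of `δ` shrinks the support
    set γ' : H1 s t := (δ : E → ℤ) e • γ - (γ : E → ℤ) e • δ
    have hγ' : ∀ f,
        (γ' : E → ℤ) f = (δ : E → ℤ) e * (γ : E → ℤ) f - (γ : E → ℤ) e * (δ : E → ℤ) f :=
      fun f => rfl
    have hss : support (γ' : E → ℤ) ⊂ support (γ : E → ℤ) := by
      refine (Set.ssubset_iff_of_subset fun f hf => ?_).mpr ⟨e, hsub he, ?_⟩
      · by_contra hγf
        have hδf : (δ : E → ℤ) f = 0 := not_not.mp (mt (@hsub f) hγf)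
        exact hf (by rw [hγ', not_not.mp hγf, hδf]; ring)
      · simp [support, hγ', mul_comm]
    obtain ⟨n, hn, hnγ'⟩ := ih _ (hN ▸ Set.ncard_lt_ncard hss (Set.toFinite _)) γ' rfl
    refine ⟨n * (δ : E → ℤ) e, mul_ne_zero hn he, ?_⟩
    have hcomb : (n * (δ : E → ℤ) e) • γ = n • γ' + (n * (γ : E → ℤ) e) • δ := by
      simp only [γ', smul_sub, mul_smul]; abel
    rw [hcomb]
    exact add_mem hnγ' (AddSubgroup.zsmul_mem _ (AddSubgroup.subset_closure (by exact hδ)) _)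

end Circuits

section Forward

variable [Fintype E] {s t : E → V} {M : AddSubmonoid G} {ℓ : E → G}

theorem exists_period_evalHom [Finite (TroPic0 s t M ℓ)] (hd : IsTropicalCurveDatum s t M ℓ)
    {γ₀ : H1 s t} {e : E} (he : (γ₀ : E → ℤ) e ≠ 0) {a : G} (ha : a ∈ faceOf M (ℓ e))
    (ha0 : a ≠ 0) :
    ∃ k : ℤ, k ≠ 0 ∧ ∃ η : H1 s t, (η : E → ℤ) e ≠ 0 ∧
      ∀ γ : H1 s t, k • ((γ : E → ℤ) e • a) = pairing ℓ η γ := by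
  have := hd.isAddTorsionFree
  obtain ⟨k, hk, η, hη⟩ :=
    exists_period_of_boundedMonodromy
      (boundedMonodromy_evalHom (s := s) (t := t) hd.length_mem e ha)
  refine ⟨k, hk, η, fun hηe => ha0 ?_, hη⟩
  have hη0 : (η : E → ℤ) = 0 :=
    eq_zero_of_pairing_self_eq_zero hd (by rw [← hη η]; simp [evalHom, hηe])
  have hγ₀ := hη γ₀
  rw [hη0, pairing, Finset.sum_eq_zero fun _ _ => by rw [Pi.zero_apply, zero_mul, zero_smul],
    evalHom_apply, smul_smul] at hγ₀
  exact (smul_eq_zero.mp hγ₀).resolve_left (mul_ne_zero hk he)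

theorem exists_nsmul_eq_nsmul_of_mem_faceOf [Finite (TroPic0 s t M ℓ)]
    (hd : IsTropicalCurveDatum s t M ℓ) {γ₀ : H1 s t} {e : E} (he : (γ₀ : E → ℤ) e ≠ 0)
    {a b : G} (ha : a ∈ faceOf M (ℓ e)) (ha0 : a ≠ 0) (hb : b ∈ faceOf M (ℓ e)) (hb0 : b ≠ 0) :
    ∃ n m : ℕ, 1 ≤ n ∧ 1 ≤ m ∧ n • a = m • b := by
  have := hd.isAddTorsionFree
  obtain ⟨k, hk, η, hηe, hη⟩ := exists_period_evalHom hd he ha ha0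
  obtain ⟨k', hk', η', hη'e, hη'⟩ := exists_period_evalHom hd he hb hb0
  refine exists_nsmul_eq_nsmul_of_zsmul_eq hd.sharp ha.1 hb.1 ha0 (mul_ne_zero hk hη'e)
    (mul_ne_zero hk' hηe) ?_
  rw [mul_smul, mul_smul, hη η', hη' η, pairing_comm]

/-- Moving the terms with `ℓ e ∈ R` of `⟨η, η⟩ = k • ⟨d, η⟩` to one side writes an element
of `M` as a `ℤ`-combination of elements of the face `R`, which forces it into `R`. -/
theorem period_eq_zero_of_length_not_mem_face (hd : IsTropicalCurveDatum s t M ℓ)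
    {R : AddSubmonoid G} (hR : IsFace M R) {d : E → ℤ} (hdR : ∀ e, ℓ e ∉ R → d e = 0) {k : ℤ}
    {η : H1 s t} (hη : k • pairing ℓ d η = pairing ℓ η η) {e : E} (he : ℓ e ∉ R) :
    (η : E → ℤ) e = 0 := by
  classical
  set c : E → ℤ := fun e => if ℓ e ∈ R then 0 else (η : E → ℤ) e * (η : E → ℤ) e
  have hc : ∀ e, 0 ≤ c e := fun e => by
    dsimp only [c]; split_ifs; exacts [le_rfl, mul_self_nonneg _]
  have hM : ∑ e, c e • ℓ e ∈ M := sum_zsmul_mem hd.length_mem hc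
  have hcl : ∑ e, c e • ℓ e ∈ AddSubgroup.closure (R : Set G) := by
    have hsum : ∑ e, c e • ℓ e = ∑ e, (if ℓ e ∈ R then
        (k * d e * (η : E → ℤ) e - (η : E → ℤ) e * (η : E → ℤ) e) • ℓ e else 0) := by
      have hdiff : ∑ e, c e • ℓ e - ∑ e, (if ℓ e ∈ R then
          (k * d e * (η : E → ℤ) e - (η : E → ℤ) e * (η : E → ℤ) e) • ℓ e else 0)
          = pairing ℓ η η - k • pairing ℓ d η := by
        rw [pairing, pairing, Finset.smul_sum, ← Finset.sum_sub_distrib, ← Finset.sum_sub_distrib]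
        refine Finset.sum_congr rfl fun e _ => ?_
        by_cases he : ℓ e ∈ R
        · simp only [c, if_pos he, smul_smul]; module
        · simp only [c, if_neg he, hdR e he]; module
      rwa [hη, sub_self, sub_eq_zero] at hdiff
    rw [hsum]
    refine AddSubgroup.sum_mem _ fun e _ => ?_
    split_ifs with he
    · exact AddSubgroup.zsmul_mem _ (AddSubgroup.subset_closure he) _
    · exact zero_mem _
  have hterm : c e • ℓ e ∈ R :=
    hR.mem_of_sum_mem (fun e _ => zsmul_mem_of_nonneg (hd.length_mem e) (hc e))
      (hR.mem_of_mem_closure hM hcl) (Finset.mem_univ e)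
  by_contra hηe
  refine he (hR.mem_of_zsmul_mem (hd.length_mem e) ?_ hterm)
  simp only [c, if_neg he]
  nlinarith [mul_self_pos.mpr hηe]

theorem mem_faceOf_of_isCircuit [Finite (TroPic0 s t M ℓ)] (hd : IsTropicalCurveDatum s t M ℓ)
    {δ : H1 s t} (hδ : IsCircuit s t δ) {e₀ e : E} (he₀ : (δ : E → ℤ) e₀ ≠ 0)
    (he : (δ : E → ℤ) e ≠ 0) : ℓ e ∈ faceOf M (ℓ e₀) := by
  classical
  set R := faceOf M (ℓ e₀)
  by_contra heR
  set d : E → ℤ := fun e => if ℓ e ∈ R then (δ : E → ℤ) e else 0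
  obtain ⟨k, hk, η, hη⟩ := exists_period_of_boundedMonodromy
    (boundedMonodromy_pairingHom (s := s) (t := t) hd.length_mem d)
  have hηR : ∀ e, ℓ e ∉ R → (η : E → ℤ) e = 0 := fun e he =>
    period_eq_zero_of_length_not_mem_face hd (isFace_faceOf _) (fun _ he => if_neg he) (hη η) he
  set θ : E → ℤ := k • d - η
  have hθ : ∀ γ : H1 s t, pairing ℓ θ γ = 0 := fun γ => by
    rw [pairing_sub_left, pairing_zsmul_left, ← hη γ, pairingHom_apply, sub_self]
  -- `θ` agrees with the cycle `k • δ - η` wherever `θ ≠ 0`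
  have hθθ : pairing ℓ θ θ = pairing ℓ θ (k • δ - η : H1 s t) :=
    Finset.sum_congr rfl fun e _ => by
      by_cases he : ℓ e ∈ R
      · simp [θ, d, if_pos he]
      · simp [θ, d, if_neg he, hηR e he]
  have hηd : (η : E → ℤ) = k • d :=
    (sub_eq_zero.mp (eq_zero_of_pairing_self_eq_zero hd (hθθ.trans (hθ _)))).symm
  have hd0 : ∀ e, (η : E → ℤ) e = 0 ↔ d e = 0 := fun e => by
    rw [hηd, Pi.smul_apply, smul_eq_mul, mul_eq_zero]; simp [hk]
  refine hδ.2 η (fun h0 => he₀ ?_) ((Set.ssubset_iff_of_subset fun e' he' => ?_).mpr ⟨e, he, ?_⟩)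
  · have := (hd0 e₀).mp (congrFun h0 e₀)
    rwa [show d e₀ = (δ : E → ℤ) e₀ from if_pos (mem_faceOf_self (hd.length_mem e₀))] at this
  · by_contra hδe'
    exact he' ((hd0 e').mpr (by simp [d, show (δ : E → ℤ) e' = 0 from not_not.mp hδe']))
  · exact not_not.mpr ((hd0 e).mpr (if_neg heR))

theorem isLogAligned_of_finite [Finite (TroPic0 s t M ℓ)] (hd : IsTropicalCurveDatum s t M ℓ) :
    IsLogAligned s t M ℓ := by
  intro δ hδ
  obtain ⟨e₀, he₀⟩ := Function.ne_iff.mp hδ.1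
  refine ⟨faceOf M (ℓ e₀), ⟨isFace_faceOf _, fun hbot => hd.length_ne_zero e₀ ?_,
    fun a ha ha0 b hb hb0 => exists_nsmul_eq_nsmul_of_mem_faceOf hd he₀ ha ha0 hb hb0⟩,
    fun e he => mem_faceOf_of_isCircuit hd hδ he₀ he⟩
  exact AddSubmonoid.mem_bot.mp (hbot ▸ mem_faceOf_self (hd.length_mem e₀))

end Forward

variable (E) in
def ratChain : (E → ℤ) →+ (E → ℚ) := (Int.castAddHom ℚ).compLeft E

@[simp]
theorem ratChain_apply (γ : E → ℤ) (e : E) : ratChain E γ e = (γ e : ℚ) := rfl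

section Backward

variable [Fintype E] {s t : E → V} {M : AddSubmonoid G} {ℓ : E → G}

theorem pairing_self_mem_of_support (F : AddSubmonoid G) {γ : E → ℤ}
    (h : ∀ e, γ e ≠ 0 → ℓ e ∈ F) : pairing ℓ γ γ ∈ F := by
  refine AddSubmonoid.sum_mem _ fun e _ => ?_
  by_cases he : γ e = 0
  · rw [he, zero_mul, zero_smul]; exact F.zero_mem
  · exact zsmul_mem_of_nonneg (h e he) (mul_self_nonneg _)

theorem map_mem_span_pairing_self_of_bounded {U : Type*} [AddCommGroup U] [Module ℚ U]
    (hd : IsTropicalCurveDatum s t M ℓ) (hali : IsLogAligned s t M ℓ) (em : G →+ U)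
    {δ : H1 s t} (hδ : IsCircuit s t δ) {x : G} (hx : Bounded M (pairing ℓ δ δ) x) :
    em x ∈ ℚ ∙ em (pairing ℓ δ δ) := by
  obtain ⟨F, hF, hδF⟩ := hali δ hδ
  obtain ⟨p, q, hq, hpq⟩ := exists_zsmul_eq_zsmul_of_bounded hd.sharp hF
    (pairing_self_mem_of_support F hδF) (fun h => hδ.1 (eq_zero_of_pairing_self_eq_zero hd h)) hx
  refine Submodule.mem_span_singleton.mpr ⟨p / q, ?_⟩
  have hem := congrArg em hpq
  rw [map_zsmul, map_zsmul, ← Int.cast_smul_eq_zsmul ℚ, ← Int.cast_smul_eq_zsmul ℚ] at hem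
  rw [div_eq_inv_mul, mul_smul, ← hem, inv_smul_smul₀ ((Int.cast_ne_zero (α := ℚ)).mpr hq)]

def ratPairing {U : Type*} [AddCommGroup U] [Module ℚ U] (w : E → U) :
    (E → ℚ) →ₗ[ℚ] (E → ℚ) →ₗ[ℚ] U :=
  LinearMap.mk₂ ℚ (fun x y => ∑ e, (x e * y e) • w e)
    (fun _ _ _ => by simp [add_mul, add_smul, Finset.sum_add_distrib])
    (fun _ _ _ => by simp [Finset.smul_sum, mul_assoc, mul_smul])
    (fun _ _ _ => by simp [mul_add, add_smul, Finset.sum_add_distrib])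
    (fun _ _ _ => by simp [Finset.smul_sum, mul_left_comm, mul_smul])

theorem map_pairing {U : Type*} [AddCommGroup U] [Module ℚ U] (em : G →+ U) (γ γ' : E → ℤ) :
    em (pairing ℓ γ γ') = ratPairing (em ∘ ℓ) (ratChain E γ) (ratChain E γ') := by
  simp only [pairing, map_sum, map_zsmul, ratPairing, LinearMap.mk₂_apply, ratChain_apply,
    Function.comp_apply, ← Int.cast_mul, Int.cast_smul_eq_zsmul]

theorem eq_zero_of_ratPairing_self_eq_zero {U : Type*} [AddCommGroup U] [Module ℚ U]
    (hd : IsTropicalCurveDatum s t M ℓ) {em : G →+ U} (hem : Function.Injective em) {x : E → ℚ}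
    (h : ratPairing (em ∘ ℓ) x x = 0) : x = 0 := by
  obtain ⟨D, hD, y, hy⟩ := exists_intCast_eq_zsmul x
  have hyx : ratChain E y = (D : ℚ) • x := funext fun e => by
    rw [ratChain_apply, hy, Pi.smul_apply, Int.cast_smul_eq_zsmul]
  have hy0 : y = 0 := eq_zero_of_pairing_self_eq_zero hd <| hem <| by
    simp only [map_pairing, hyx, map_smul, LinearMap.smul_apply, h, smul_zero, map_zero]
  funext e
  have hDx := hy e
  rw [hy0, Pi.zero_apply, Int.cast_zero, eq_comm, smul_eq_zero] at hDx
  exact hDx.resolve_left hD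

theorem exists_circuit_basis :
    ∃ (B : Set (E → ℚ)) (_ : Fintype B) (δ : B → H1 s t), (∀ i, IsCircuit s t (δ i)) ∧
      (∀ i, ratChain E (δ i) = i) ∧ LinearIndependent ℚ ((↑) : B → E → ℚ) ∧
      ∀ γ : H1 s t, ∃ n : ℤ, n ≠ 0 ∧ n • γ ∈ AddSubgroup.closure (Set.range δ) := by
  set cast := (ratChain E).comp (H1 s t).subtype
  have hcast : Function.Injective cast :=
    (Int.cast_injective.comp_left).comp Subtype.val_injective
  obtain ⟨B, hBC, hBspan, hBind⟩ :=
    exists_linearIndependent ℚ (cast '' {δ | IsCircuit s t δ})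
  choose δ hδ hδB using fun i : B => hBC i.2
  have hB : cast '' Set.range δ = B := by
    rw [← Set.range_comp, show ⇑cast ∘ δ = Subtype.val from funext hδB, Subtype.range_coe]
  refine ⟨B, hBind.setFinite.fintype, δ, hδ, hδB, hBind, fun γ => ?_⟩
  rw [← mem_span_image_iff_exists_zsmul_mem_closure hcast, hB, hBspan,
    mem_span_image_iff_exists_zsmul_mem_closure hcast]
  exact exists_zsmul_mem_closure_isCircuit γ

theorem exists_zsmul_mem_range_periodMap_of_isLogAligned (hd : IsTropicalCurveDatum s t M ℓ)
    (hG : AddGroup.FG G) (hali : IsLogAligned s t M ℓ) {φ : ↥(H1 s t) →+ G}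
    (hφ : φ ∈ BMHom s t M ℓ) : ∃ k : ℤ, k ≠ 0 ∧ k • φ ∈ (periodMap s t ℓ).range := by
  have := hd.isAddTorsionFree
  obtain ⟨n, em, hem⟩ := exists_injective_addMonoidHom_rat hG
  obtain ⟨B, _, δ, hδ, hδB, hBind, hspan⟩ := exists_circuit_basis (s := s) (t := t)
  set Q := ratPairing (em ∘ ℓ)
  have hQδ : ∀ i j : B, Q j i = em (pairing ℓ (δ j) (δ i)) := fun i j => by
    rw [map_pairing, hδB, hδB]
  obtain ⟨c, hc⟩ := exists_pairing_sum_smul_eq Q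
    (fun _ => eq_zero_of_ratPairing_self_eq_zero hd hem) hBind (u := fun i => em (φ (δ i)))
    (fun i j => by
      rw [hQδ, hQδ]
      exact map_mem_span_pairing_self_of_bounded hd hali em (hδ i)
        (boundedMonodromy_pairingHom hd.length_mem (δ j) (δ i)))
    (fun i => by
      rw [hQδ]
      exact map_mem_span_pairing_self_of_bounded hd hali em (hδ i) (hφ (δ i)))
  obtain ⟨D, hD, w, hw⟩ := exists_intCast_eq_zsmul c
  refine ⟨D, hD, ∑ i, w i • δ i, AddMonoidHom.eq_of_eqOn_of_zsmul_mem_closure hspan ?_⟩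
  rintro _ ⟨i, rfl⟩
  have hη : ratChain E (∑ j, w j • δ j : H1 s t) = (D : ℚ) • ∑ j, c j • (j : E → ℚ) := by
    simp only [AddSubgroup.val_finsetSum, AddSubgroup.coe_zsmul, map_sum, map_zsmul, hδB,
      Finset.smul_sum, smul_smul, ← Int.cast_smul_eq_zsmul ℚ, hw, smul_eq_mul]
  apply hem
  calc em (periodMap s t ℓ (∑ j, w j • δ j) (δ i))
      = Q (ratChain E (∑ j, w j • δ j : H1 s t)) i := by rw [← hδB i]; exact map_pairing em _ _
    _ = (D : ℚ) • em (φ (δ i)) := by rw [hη, map_smul, LinearMap.smul_apply, hc i]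
    _ = em ((D • φ) (δ i)) := by
      rw [AddMonoidHom.smul_apply, map_zsmul, Int.cast_smul_eq_zsmul]

end Backward

theorem troPic0_finite_iff_logAligned_general {V E : Type*} [Fintype E]
    {G : Type*} [AddCommGroup G]
    (s t : E → V) (M : AddSubmonoid G) (ℓ : E → G)
    (hG : AddGroup.FG G) (hdatum : IsTropicalCurveDatum s t M ℓ) :
    Finite (TroPic0 s t M ℓ) ↔ IsLogAligned s t M ℓ := by
  constructor
  · intro _
    exact isLogAligned_of_finite hdatum
  · intro hali
    exact (finite_troPic0_iff hG).mpr fun φ hφ =>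
      exists_zsmul_mem_range_periodMap_of_isLogAligned hdatum hG hali hφ

/-- pointwise core of Theorem 8.2 of the paper: for a connected tropical
curve datum, the tropical Jacobian is finite if and only if the datum is log aligned. -/
theorem troPic0_finite_iff_logAligned {V E : Type*} [Fintype V] [Fintype E] [Nonempty V]
    {G : Type*} [AddCommGroup G]
    (s t : E → V) (M : AddSubmonoid G) (ℓ : E → G)
    (hG : AddGroup.FG G) (hdatum : IsTropicalCurveDatum s t M ℓ)
    (hconn : GraphConnected s t) :
    Finite (TroPic0 s t M ℓ) ↔ IsLogAligned s t M ℓ :=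
  troPic0_finite_iff_logAligned_general s t M ℓ hG hdatum

end TropicalNeron
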